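/- Fix an integer m ≥ 2 and a real δ > 0. There is a constant C > 0 depending only on m and δ such that for every ζ ∈ (0,1/10], every integer n ≥ ζ^{−2}, all integers a_1, a_2 ∈ [ζn, n], every prescribed label lb_0 ∈ {O,Y}, and every integer ℓ ≥ 1: ∑ over all tuples (π_0,…,π_ℓ) of integers with π_0 = a_1, π_ℓ = a_2, π_i ∈ [⌈ζn⌉, n] for 1 ≤ i ≤ ℓ−1 and π_i ≠ π_{i−1} for all 1 ≤ i ≤ ℓ, of ∏_{i=1}^{ℓ} κ((π_{i−1}/n, lb_{i−1}), (π_i/n, lb_i)) ≤ C ζ^{−2} ν^{ℓ} n^{ℓ−1}, where lb_i = O if π_i ≤ π_{i−1} and lb_i = Y otherwise (1 ≤ i ≤ ℓ). -/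

import Mathlib

open MeasureTheory Filter Set
open scoped ENNReal NNReal Classical

noncomputable section

namespace PAPaper

/-- The exponential growth parameter `ν` of the Pólya point tree. -/
def nuConst (m : ℕ) (δ : ℝ) : ℝ :=
  2 * (((m : ℝ) * ((m : ℝ) + δ) +
      Real.sqrt ((m : ℝ) * ((m : ℝ) - 1) * ((m : ℝ) + δ) * ((m : ℝ) + 1 + δ))) / δ)

/-- `χ = (m+δ)/(2m+δ)`. -/
def chiC (m : ℕ) (δ : ℝ) : ℝ := ((m : ℝ) + δ) / (2 * (m : ℝ) + δ)

/-- The labels `O` (old) and `Y` (young) of the Pólya point tree. -/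
inductive Label : Type
  | O : Label
  | Y : Label
deriving DecidableEq

instance : Fintype Label :=
  ⟨{Label.O, Label.Y}, fun x => by cases x <;> simp⟩

/-- The constants `c_{st}` of the offspring kernel. -/
def cst (m : ℕ) (δ : ℝ) : Label → Label → ℝ
  | .O, .O => (m : ℝ) * ((m : ℝ) + δ) / (2 * (m : ℝ) + δ)
  | .O, .Y => (m : ℝ) * ((m : ℝ) + 1 + δ) / (2 * (m : ℝ) + δ)
  | .Y, .O => ((m : ℝ) - 1) * ((m : ℝ) + δ) / (2 * (m : ℝ) + δ)
  | .Y, .Y => (m : ℝ) * ((m : ℝ) + δ) / (2 * (m : ℝ) + δ)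

/-- The offspring kernel `κ((x,s),(y,t))` of the Pólya point tree. -/
def ker (m : ℕ) (δ : ℝ) (p q : ℝ × Label) : ℝ :=
  cst m δ p.2 q.2 *
    ((if q.1 < p.1 ∧ q.2 = Label.O then 1 else 0) +
      (if p.1 < q.1 ∧ q.2 = Label.Y then 1 else 0)) /
    (max p.1 q.1 ^ chiC m δ * min p.1 q.1 ^ (1 - chiC m δ))

/-- The entries of a `(k+1)`-tuple, as a function of a natural number index. -/
def app {k : ℕ} {α : Type*} (f : Fin (k + 1) → α) (i : ℕ) : α :=
  f ⟨min i k, Nat.lt_succ_of_le (Nat.min_le_right i k)⟩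

/-- The label sequence of a path of vertices: `lb_0` is the prescribed label, and
`lb_i = O` if `π_i ≤ π_{i-1}`, `lb_i = Y` otherwise. -/
def lbl {k : ℕ} (lb0 : Label) (π : Fin (k + 1) → ℕ) (i : ℕ) : Label :=
  if i = 0 then lb0 else if app π i ≤ app π (i - 1) then Label.O else Label.Y

lemma sum_rpow_high {q : ℝ} (hq : q < -1) (a n : ℕ) (ha : 1 ≤ a) :
    ∑ y ∈ Finset.Icc (a + 1) n, (y : ℝ) ^ q ≤ (a : ℝ) ^ (q + 1) / (-(q + 1)) := by
  have hc : (0:ℝ) < -(q+1) := by linarith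
  have hapos : (0:ℝ) < a := by exact_mod_cast ha
  have hA : (0:ℝ) ≤ (a:ℝ) ^ (q+1) := Real.rpow_nonneg hapos.le _
  rcases le_or_gt n a with hna | han
  · rw [Finset.Icc_eq_empty (by omega)]
    simp only [Finset.sum_empty]
    positivity
  -- main case
  have key : ∑ i ∈ Finset.range (n - a), (fun t : ℝ => t ^ q) ((a:ℝ) + ((i + 1 : ℕ) : ℝ)) ≤
      ∫ x in (a:ℝ)..((a:ℝ) + ((n - a : ℕ) : ℝ)), (fun t : ℝ => t ^ q) x := by
    refine AntitoneOn.sum_le_integral (f := fun t : ℝ => t ^ q) (x₀ := (a:ℝ)) (a := n - a) ?_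
    intro x hx y hy hxy
    exact Real.rpow_le_rpow_of_nonpos (lt_of_lt_of_le hapos hx.1) hxy (by linarith)
  have hsum : ∑ y ∈ Finset.Icc (a + 1) n, (y : ℝ) ^ q =
      ∑ i ∈ Finset.range (n - a), (fun t : ℝ => t ^ q) ((a:ℝ) + ((i + 1 : ℕ) : ℝ)) := by
    rw [← Finset.Ico_add_one_right_eq_Icc, Finset.sum_Ico_eq_sum_range]
    have h2 : n + 1 - (a + 1) = n - a := by omega
    rw [h2]
    refine Finset.sum_congr rfl fun i _ => ?_
    simp only []
    push_cast
    ring_nf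
  have hint : ∫ x in (a:ℝ)..((a:ℝ) + ((n - a : ℕ) : ℝ)), x ^ q =
      (((a:ℝ) + ((n - a : ℕ) : ℝ)) ^ (q+1) - (a:ℝ) ^ (q+1)) / (q+1) := by
    rw [integral_rpow]
    right
    constructor
    · intro h; exact absurd h (by linarith)
    · intro h
      rw [Set.mem_uIcc] at h
      have : (0:ℝ) ≤ ((n - a : ℕ) : ℝ) := by positivity
      rcases h with ⟨h1, _⟩ | ⟨h1, _⟩ <;> linarith
  rw [hsum]
  refine key.trans ?_
  simp only []
  rw [hint]
  have hX : (0:ℝ) ≤ ((a:ℝ) + ((n - a : ℕ):ℝ)) ^ (q+1) := Real.rpow_nonneg (by positivity) _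
  have e : (((a:ℝ) + ((n - a : ℕ):ℝ)) ^ (q+1) - (a:ℝ) ^ (q+1)) / (q + 1) =
      ((a:ℝ) ^ (q+1) - ((a:ℝ) + ((n - a : ℕ):ℝ)) ^ (q+1)) / (-(q+1)) := by
    rw [div_eq_div_iff (by linarith) (by linarith)]; ring
  rw [e]
  gcongr
  linarith

lemma sum_rpow_low {p : ℝ} (hp : -1 < p) (hp0 : p ≤ 0) (k : ℕ) :
    ∑ y ∈ Finset.Icc 1 k, (y : ℝ) ^ p ≤ (k : ℝ) ^ (p + 1) / (p + 1) := by
  have hc : (0:ℝ) < p + 1 := by linarith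
  rcases Nat.eq_zero_or_pos k with rfl | hk
  · simp [Real.zero_rpow (by positivity : p + 1 ≠ 0)]
  have key : ∑ i ∈ Finset.range (k - 1), (fun t : ℝ => t ^ p) ((1:ℝ) + ((i + 1 : ℕ):ℝ)) ≤
      ∫ x in (1:ℝ)..((1:ℝ) + ((k - 1 : ℕ):ℝ)), (fun t : ℝ => t ^ p) x := by
    refine AntitoneOn.sum_le_integral (f := fun t : ℝ => t ^ p) (x₀ := (1:ℝ)) (a := k - 1) ?_
    intro x hx y hy hxy
    exact Real.rpow_le_rpow_of_nonpos (lt_of_lt_of_le one_pos hx.1) hxy hp0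
  have hsplit : ∑ y ∈ Finset.Icc 1 k, (y : ℝ) ^ p =
      1 + ∑ i ∈ Finset.range (k - 1), (fun t : ℝ => t ^ p) ((1:ℝ) + ((i + 1 : ℕ):ℝ)) := by
    have h1 : Finset.Icc 1 k = Finset.Icc 1 1 ∪ Finset.Icc 2 k := by
      ext x; simp only [Finset.mem_Icc, Finset.mem_union]; omega
    rw [h1, Finset.sum_union (by simp only [Finset.disjoint_left, Finset.mem_Icc]; omega)]
    congr 1
    · simp
    · rw [← Finset.Ico_add_one_right_eq_Icc, Finset.sum_Ico_eq_sum_range]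
      have h2 : k + 1 - 2 = k - 1 := by omega
      rw [h2]
      refine Finset.sum_congr rfl fun i _ => ?_
      simp only []
      push_cast
      ring_nf
  have hint : ∫ x in (1:ℝ)..((1:ℝ) + ((k - 1 : ℕ):ℝ)), x ^ p =
      (((1:ℝ) + ((k - 1 : ℕ):ℝ)) ^ (p+1) - 1 ^ (p+1)) / (p+1) := integral_rpow (Or.inl hp)
  rw [hsplit]
  have h1k : (1:ℝ) + ((k - 1 : ℕ):ℝ) = (k : ℝ) := by
    have : ((k - 1 : ℕ):ℝ) = (k : ℝ) - 1 := by
      push_cast [Nat.cast_sub hk]; ring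
    rw [this]; ring
  have key2 := key.trans_eq (by simpa using hint)
  rw [h1k] at key2
  have e : (1:ℝ) + ((k:ℝ) ^ (p+1) - 1) / (p+1) =
      ((p + 1) + ((k:ℝ) ^ (p+1) - 1)) / (p+1) := by
    field_simp
  calc 1 + ∑ i ∈ Finset.range (k - 1), (fun t : ℝ => t ^ p) ((1:ℝ) + ((i + 1 : ℕ):ℝ))
      ≤ 1 + ((k:ℝ) ^ (p+1) - 1) / (p+1) := by linarith
    _ ≤ (k : ℝ) ^ (p + 1) / (p + 1) := by
        rw [e]
        gcongr
        linarith


def wgt (m : ℕ) (δ : ℝ) : Label → ℝ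
  | .O => Real.sqrt ((m : ℝ) * ((m : ℝ) + 1 + δ))
  | .Y => Real.sqrt (((m : ℝ) - 1) * ((m : ℝ) + δ))

def dlb (a y : ℕ) : Label := if y ≤ a then Label.O else Label.Y

section facts
variable {m : ℕ} {δ : ℝ} (hm : 2 ≤ m) (hδ : 0 < δ)
include hm hδ

lemma hm2 : (2:ℝ) ≤ (m:ℝ) := by exact_mod_cast hm

lemma h2A : (0:ℝ) < 2 * (m:ℝ) + δ := by have := hm2 hm hδ; linarith

lemma chi_half : chiC m δ - 1/2 = δ / (2 * (2 * (m:ℝ) + δ)) := by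
  have h := h2A hm hδ
  unfold chiC
  field_simp
  ring

lemma chi_gt_half : 1/2 < chiC m δ := by
  have h := h2A hm hδ
  have := chi_half hm hδ
  nlinarith [div_pos hδ (by linarith : (0:ℝ) < 2 * (2 * (m:ℝ) + δ))]

lemma chi_lt_one : chiC m δ < 1 := by
  have h := h2A hm hδ
  have hA := hm2 hm hδ
  unfold chiC
  rw [div_lt_one h]
  linarith

lemma wgt_pos : ∀ s, 0 < wgt m δ s := by
  have hA := hm2 hm hδ
  intro s
  cases s <;> simp only [wgt] <;> apply Real.sqrt_pos.2 <;> nlinarith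

lemma cst_nonneg : ∀ s t, 0 ≤ cst m δ s t := by
  have hA := hm2 hm hδ
  have h := h2A hm hδ
  intro s t
  cases s <;> cases t <;> simp only [cst] <;> apply div_nonneg ?_ h.le <;> nlinarith

lemma cst_le : ∀ s t, cst m δ s t ≤ (m:ℝ) * ((m:ℝ) + 1 + δ) / (2 * (m:ℝ) + δ) := by
  have hA := hm2 hm hδ
  have h := h2A hm hδ
  intro s t
  cases s <;> cases t <;> simp only [cst] <;> rw [div_le_div_iff₀ h h] <;> nlinarith

lemma eigen : ∀ s, cst m δ s Label.O * wgt m δ Label.O + cst m δ s Label.Y * wgt m δ Label.Y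
    = (nuConst m δ * (chiC m δ - 1/2)) * wgt m δ s := by
  have hA := hm2 hm hδ
  have h := h2A hm hδ
  have hO2 : wgt m δ Label.O ^ 2 = (m:ℝ) * ((m:ℝ) + 1 + δ) := by
    simp only [wgt]; rw [Real.sq_sqrt (by nlinarith)]
  have hY2 : wgt m δ Label.Y ^ 2 = ((m:ℝ) - 1) * ((m:ℝ) + δ) := by
    simp only [wgt]; rw [Real.sq_sqrt (by nlinarith)]
  have hR : Real.sqrt ((m:ℝ) * ((m:ℝ) - 1) * ((m:ℝ) + δ) * ((m:ℝ) + 1 + δ))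
      = wgt m δ Label.O * wgt m δ Label.Y := by
    simp only [wgt]
    rw [← Real.sqrt_mul (by nlinarith)]
    congr 1 <;> ring
  have hν : nuConst m δ * (chiC m δ - 1/2)
      = ((m:ℝ) * ((m:ℝ) + δ) + wgt m δ Label.O * wgt m δ Label.Y) / (2 * (m:ℝ) + δ) := by
    rw [chi_half hm hδ]
    unfold nuConst
    rw [hR]
    field_simp
  intro s
  rw [hν]
  cases s <;> simp only [cst]
  · linear_combination (-(wgt m δ Label.Y)/(2*(m:ℝ)+δ)) * hO2
  · linear_combination (-(wgt m δ Label.O)/(2*(m:ℝ)+δ)) * hY2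

end facts


lemma rpow_combine {x N : ℝ} (hx : 0 < x) (hN : 0 < N) {u v w : ℝ}
    (h1 : u + v = -(1/2)) (h2 : u + w = -(3/2)) :
    (x/N) ^ u * (x ^ v / N ^ w) = N * (x/N) ^ (-(1/2) : ℝ) := by
  rw [Real.div_rpow hx.le hN.le, Real.div_rpow hx.le hN.le, div_mul_div_comm,
    ← Real.rpow_add hx, ← Real.rpow_add hN, h1, h2]
  have h3 : N * N ^ (-(3/2) : ℝ) = N ^ (-(1/2) : ℝ) := by
    nth_rewrite 1 [← Real.rpow_one N]
    rw [← Real.rpow_add hN]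
    norm_num
  rw [← h3]
  have hne : N ^ (-(3/2) : ℝ) ≠ 0 := by positivity
  field_simp

/-- The per-step eigenweight bound. -/
lemma step {m : ℕ} {δ : ℝ} (hm : 2 ≤ m) (hδ : 0 < δ) (n a : ℕ) (hn : 1 ≤ n) (ha1 : 1 ≤ a) (han : a ≤ n)
    (s : Label) :
    ∑ y ∈ Finset.range (n+1),
      ker m δ ((a:ℝ)/n, s) ((y:ℝ)/n, dlb a y) * (wgt m δ (dlb a y) * ((y:ℝ)/n) ^ (-(1/2) : ℝ))
    ≤ nuConst m δ * n * (wgt m δ s * ((a:ℝ)/n) ^ (-(1/2) : ℝ)) := by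
  have hN : (0:ℝ) < n := by exact_mod_cast hn
  have hx : (0:ℝ) < a := by exact_mod_cast ha1
  have hχ2 := chi_gt_half hm hδ
  have hχ1 := chi_lt_one hm hδ
  set χ := chiC m δ with hχdef
  have hcpos : (0:ℝ) < χ - 1/2 := by linarith
  -- split the sum
  have hsplit : ∑ y ∈ Finset.range (n+1),
      ker m δ ((a:ℝ)/n, s) ((y:ℝ)/n, dlb a y) * (wgt m δ (dlb a y) * ((y:ℝ)/n) ^ (-(1/2) : ℝ))
      = (∑ y ∈ Finset.range a,
          ker m δ ((a:ℝ)/n, s) ((y:ℝ)/n, dlb a y) * (wgt m δ (dlb a y) * ((y:ℝ)/n) ^ (-(1/2) : ℝ)))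
        + (ker m δ ((a:ℝ)/n, s) ((a:ℝ)/n, dlb a a) * (wgt m δ (dlb a a) * ((a:ℝ)/n) ^ (-(1/2) : ℝ)))
        + ∑ y ∈ Finset.Icc (a+1) n,
          ker m δ ((a:ℝ)/n, s) ((y:ℝ)/n, dlb a y) * (wgt m δ (dlb a y) * ((y:ℝ)/n) ^ (-(1/2) : ℝ)) := by
    rw [Finset.range_eq_Ico, ← Finset.sum_Ico_consecutive _ (Nat.zero_le a) (by omega : a ≤ n + 1),
      ← Finset.range_eq_Ico, Finset.Ico_add_one_right_eq_Icc, Finset.Icc_eq_cons_Ioc han, Finset.sum_cons,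
      ← Finset.Icc_add_one_left_eq_Ioc]
    ring
  rw [hsplit]
  -- middle term vanishes
  have hmid : ker m δ ((a:ℝ)/n, s) ((a:ℝ)/n, dlb a a) * (wgt m δ (dlb a a) * ((a:ℝ)/n) ^ (-(1/2) : ℝ)) = 0 := by
    simp [ker, lt_irrefl]
  rw [hmid, add_zero]
  have hxN : (0:ℝ) < (a:ℝ)/n := div_pos hx hN
  -- O part
  have hOterm : ∀ y ∈ Finset.range a,
      ker m δ ((a:ℝ)/n, s) ((y:ℝ)/n, dlb a y) * (wgt m δ (dlb a y) * ((y:ℝ)/n) ^ (-(1/2) : ℝ))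
      = cst m δ s Label.O * wgt m δ Label.O *
        (((a:ℝ)/n) ^ (-χ) * (((y:ℝ)/n) ^ (χ - 3/2))) := by
    intro y hy
    rw [Finset.mem_range] at hy
    have hdlb : dlb a y = Label.O := by simp [dlb, Nat.le_of_lt hy]
    have hyx : (y:ℝ)/n < (a:ℝ)/n := by
      apply div_lt_div_of_pos_right ?_ hN
      exact_mod_cast hy
    rw [hdlb]
    rcases Nat.eq_zero_or_pos y with rfl | hy1
    · have h0 : ((0:ℕ):ℝ)/n = 0 := by simp
      rw [h0, ker]
      simp only []
      rw [min_eq_right (le_of_lt (by rwa [h0] at hyx)), max_eq_left (le_of_lt (by rwa [h0] at hyx))]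
      rw [Real.zero_rpow (by intro hc; exact absurd hc (by intro hc'; linarith) : (1 - χ) ≠ 0)]
      rw [Real.zero_rpow (by intro hc; linarith : (χ - 3/2) ≠ 0)]
      simp
    · have hyp : (0:ℝ) < (y:ℝ)/n := div_pos (by exact_mod_cast hy1) hN
      simp only [ker, max_eq_left hyx.le, min_eq_right hyx.le, hyx, not_lt.2 hyx.le, and_true,
        true_and, and_false, false_and, if_true, if_false, ite_true, ite_false, reduceCtorEq]
      have e1 : (((y:ℝ)/n) ^ (χ - 3/2)) = (((y:ℝ)/n) ^ (1 - χ))⁻¹ * ((y:ℝ)/n) ^ (-(1/2) : ℝ) := by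
        rw [← Real.rpow_neg hyp.le, ← Real.rpow_add hyp]
        congr 1 <;> ring
      have e2 : (((a:ℝ)/n) ^ (-χ)) = (((a:ℝ)/n) ^ χ)⁻¹ := Real.rpow_neg hxN.le χ
      rw [e1, e2]
      field_simp
      ring
  have hOsum : ∑ y ∈ Finset.range a,
      ker m δ ((a:ℝ)/n, s) ((y:ℝ)/n, dlb a y) * (wgt m δ (dlb a y) * ((y:ℝ)/n) ^ (-(1/2) : ℝ))
      ≤ cst m δ s Label.O * wgt m δ Label.O / (χ - 1/2) * (n * ((a:ℝ)/n) ^ (-(1/2) : ℝ)) := by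
    rw [Finset.sum_congr rfl hOterm, ← Finset.mul_sum]
    have hsum1 : ∑ y ∈ Finset.range a, (((y:ℝ)/n) ^ (χ - 3/2))
        = ∑ y ∈ Finset.Icc 1 (a-1), ((y:ℝ) ^ (χ - 3/2) / (n:ℝ) ^ (χ - 3/2)) := by
      have hr : Finset.range a = insert 0 (Finset.Icc 1 (a-1)) := by
        ext z; simp only [Finset.mem_range, Finset.mem_insert, Finset.mem_Icc]; omega
      rw [hr, Finset.sum_insert (by simp)]
      rw [show ((0:ℕ):ℝ)/n = 0 by simp, Real.zero_rpow (by intro hc; linarith : (χ - 3/2) ≠ 0),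
        zero_add]
      exact Finset.sum_congr rfl fun y _ => Real.div_rpow (Nat.cast_nonneg y) hN.le _
    have hsum2 : ∑ y ∈ Finset.Icc 1 (a-1), ((y:ℝ) ^ (χ - 3/2) / (n:ℝ) ^ (χ - 3/2))
        ≤ ((a:ℝ) ^ (χ - 1/2) / (χ - 1/2)) / (n:ℝ) ^ (χ - 3/2) := by
      rw [← Finset.sum_div]
      have h2 : ∑ y ∈ Finset.Icc 1 (a-1), (y:ℝ) ^ (χ - 3/2) ≤ (a:ℝ) ^ (χ - 1/2) / (χ - 1/2) := by
        calc ∑ y ∈ Finset.Icc 1 (a-1), (y:ℝ) ^ (χ - 3/2)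
            ≤ ((a-1:ℕ):ℝ) ^ (χ - 3/2 + 1) / (χ - 3/2 + 1) :=
              sum_rpow_low (by linarith) (by linarith) _
          _ ≤ (a:ℝ) ^ (χ - 1/2) / (χ - 1/2) := by
              rw [show χ - 3/2 + 1 = χ - 1/2 by ring]
              gcongr
              exact_mod_cast Nat.sub_le a 1
      gcongr
    have hcomb := rpow_combine hx hN (u := -χ) (v := χ - 1/2) (w := χ - 3/2)
      (by ring) (by ring)
    rw [← Finset.mul_sum]
    calc cst m δ s Label.O * wgt m δ Label.O *
          (((a:ℝ)/n) ^ (-χ) * ∑ y ∈ Finset.range a, ((y:ℝ)/n) ^ (χ - 3/2))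
        ≤ cst m δ s Label.O * wgt m δ Label.O *
          (((a:ℝ)/n) ^ (-χ) * (((a:ℝ) ^ (χ - 1/2) / (χ - 1/2)) / (n:ℝ) ^ (χ - 3/2))) := by
          apply mul_le_mul_of_nonneg_left ?_
            (mul_nonneg (cst_nonneg hm hδ _ _) (wgt_pos hm hδ _).le)
          apply mul_le_mul_of_nonneg_left ?_ (Real.rpow_nonneg hxN.le _)
          rw [hsum1]
          exact hsum2
      _ = cst m δ s Label.O * wgt m δ Label.O / (χ - 1/2) * (n * ((a:ℝ)/n) ^ (-(1/2) : ℝ)) := by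
          rw [show ((a:ℝ)/n) ^ (-χ) * (((a:ℝ) ^ (χ - 1/2) / (χ - 1/2)) / (n:ℝ) ^ (χ - 3/2))
              = (((a:ℝ)/n) ^ (-χ) * ((a:ℝ) ^ (χ - 1/2) / (n:ℝ) ^ (χ - 3/2))) / (χ - 1/2) by ring,
            hcomb]
          ring
  -- Y part
  have hYterm : ∀ y ∈ Finset.Icc (a+1) n,
      ker m δ ((a:ℝ)/n, s) ((y:ℝ)/n, dlb a y) * (wgt m δ (dlb a y) * ((y:ℝ)/n) ^ (-(1/2) : ℝ))
      = cst m δ s Label.Y * wgt m δ Label.Y *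
        (((a:ℝ)/n) ^ (χ - 1) * (((y:ℝ)/n) ^ (-χ - 1/2))) := by
    intro y hy
    rw [Finset.mem_Icc] at hy
    have hdlb : dlb a y = Label.Y := by simp only [dlb, if_neg (by omega : ¬ y ≤ a)]
    have hxy : (a:ℝ)/n < (y:ℝ)/n := by
      apply div_lt_div_of_pos_right ?_ hN
      exact_mod_cast (by omega : a < y)
    have hyp : (0:ℝ) < (y:ℝ)/n := lt_trans hxN hxy
    rw [hdlb]
    simp only [ker, max_eq_right hxy.le, min_eq_left hxy.le, hxy, not_lt.2 hxy.le, and_true,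
      true_and, and_false, false_and, if_true, if_false, ite_true, ite_false, reduceCtorEq]
    have e1 : (((y:ℝ)/n) ^ (-χ - 1/2)) = (((y:ℝ)/n) ^ χ)⁻¹ * ((y:ℝ)/n) ^ (-(1/2) : ℝ) := by
      rw [← Real.rpow_neg hyp.le, ← Real.rpow_add hyp]
      congr 1 <;> ring
    have e2 : (((a:ℝ)/n) ^ (χ - 1)) = (((a:ℝ)/n) ^ (1 - χ))⁻¹ := by
      rw [← Real.rpow_neg hxN.le]
      congr 1 <;> ring
    rw [e1, e2]
    field_simp
    ring
  have hYsum : ∑ y ∈ Finset.Icc (a+1) n,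
      ker m δ ((a:ℝ)/n, s) ((y:ℝ)/n, dlb a y) * (wgt m δ (dlb a y) * ((y:ℝ)/n) ^ (-(1/2) : ℝ))
      ≤ cst m δ s Label.Y * wgt m δ Label.Y / (χ - 1/2) * (n * ((a:ℝ)/n) ^ (-(1/2) : ℝ)) := by
    rw [Finset.sum_congr rfl hYterm, ← Finset.mul_sum, ← Finset.mul_sum]
    have hsum1 : ∑ y ∈ Finset.Icc (a+1) n, (((y:ℝ)/n) ^ (-χ - 1/2))
        = ∑ y ∈ Finset.Icc (a+1) n, ((y:ℝ) ^ (-χ - 1/2) / (n:ℝ) ^ (-χ - 1/2)) :=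
      Finset.sum_congr rfl fun y _ => Real.div_rpow (Nat.cast_nonneg y) hN.le _
    have hsum2 : ∑ y ∈ Finset.Icc (a+1) n, ((y:ℝ) ^ (-χ - 1/2) / (n:ℝ) ^ (-χ - 1/2))
        ≤ ((a:ℝ) ^ (1/2 - χ) / (χ - 1/2)) / (n:ℝ) ^ (-χ - 1/2) := by
      rw [← Finset.sum_div]
      have h2 : ∑ y ∈ Finset.Icc (a+1) n, (y:ℝ) ^ (-χ - 1/2) ≤ (a:ℝ) ^ (1/2 - χ) / (χ - 1/2) := by
        have := sum_rpow_high (q := -χ - 1/2) (by linarith) a n ha1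
        rw [show -χ - 1/2 + 1 = 1/2 - χ by ring, show -(1/2 - χ) = χ - 1/2 by ring] at this
        exact this
      gcongr
    have hcomb := rpow_combine hx hN (u := χ - 1) (v := 1/2 - χ) (w := -χ - 1/2)
      (by ring) (by ring)
    calc cst m δ s Label.Y * wgt m δ Label.Y *
          (((a:ℝ)/n) ^ (χ - 1) * ∑ y ∈ Finset.Icc (a+1) n, ((y:ℝ)/n) ^ (-χ - 1/2))
        ≤ cst m δ s Label.Y * wgt m δ Label.Y *
          (((a:ℝ)/n) ^ (χ - 1) * (((a:ℝ) ^ (1/2 - χ) / (χ - 1/2)) / (n:ℝ) ^ (-χ - 1/2))) := by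
          apply mul_le_mul_of_nonneg_left ?_
            (mul_nonneg (cst_nonneg hm hδ _ _) (wgt_pos hm hδ _).le)
          apply mul_le_mul_of_nonneg_left ?_ (Real.rpow_nonneg hxN.le _)
          rw [hsum1]
          exact hsum2
      _ = cst m δ s Label.Y * wgt m δ Label.Y / (χ - 1/2) * (n * ((a:ℝ)/n) ^ (-(1/2) : ℝ)) := by
          rw [show ((a:ℝ)/n) ^ (χ - 1) * (((a:ℝ) ^ (1/2 - χ) / (χ - 1/2)) / (n:ℝ) ^ (-χ - 1/2))
              = (((a:ℝ)/n) ^ (χ - 1) * ((a:ℝ) ^ (1/2 - χ) / (n:ℝ) ^ (-χ - 1/2))) / (χ - 1/2) by ring,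
            hcomb]
          ring
  -- combine
  have hE := eigen hm hδ s
  calc (∑ y ∈ Finset.range a,
          ker m δ ((a:ℝ)/n, s) ((y:ℝ)/n, dlb a y) * (wgt m δ (dlb a y) * ((y:ℝ)/n) ^ (-(1/2) : ℝ)))
        + ∑ y ∈ Finset.Icc (a+1) n,
          ker m δ ((a:ℝ)/n, s) ((y:ℝ)/n, dlb a y) * (wgt m δ (dlb a y) * ((y:ℝ)/n) ^ (-(1/2) : ℝ))
      ≤ cst m δ s Label.O * wgt m δ Label.O / (χ - 1/2) * (n * ((a:ℝ)/n) ^ (-(1/2) : ℝ))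
        + cst m δ s Label.Y * wgt m δ Label.Y / (χ - 1/2) * (n * ((a:ℝ)/n) ^ (-(1/2) : ℝ)) :=
        add_le_add hOsum hYsum
    _ = (cst m δ s Label.O * wgt m δ Label.O + cst m δ s Label.Y * wgt m δ Label.Y) *
          ((n * ((a:ℝ)/n) ^ (-(1/2) : ℝ)) / (χ - 1/2)) := by ring
    _ = nuConst m δ * n * (wgt m δ s * ((a:ℝ)/n) ^ (-(1/2) : ℝ)) := by
        rw [hE, ← hχdef]
        have hne : χ - 1/2 ≠ 0 := ne_of_gt hcpos
        have hinv : (χ - 1/2) * (χ - 1/2)⁻¹ = 1 := mul_inv_cancel₀ hne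
        linear_combination (nuConst m δ * wgt m δ s * ((n:ℝ) * ((a:ℝ)/n) ^ (-(1/2) : ℝ))) * hinv


section TTsec
variable {m : ℕ} {δ : ℝ}

lemma ker_nonneg (hm : 2 ≤ m) (hδ : 0 < δ) {x y : ℝ} (hx : 0 ≤ x) (hy : 0 ≤ y) (s t : Label) :
    0 ≤ ker m δ (x, s) (y, t) := by
  unfold ker
  apply div_nonneg
  · apply mul_nonneg (cst_nonneg hm hδ _ _)
    apply add_nonneg <;> · split <;> norm_num
  · apply mul_nonneg <;> apply Real.rpow_nonneg
    · exact le_max_of_le_left hx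
    · exact le_min hx hy

lemma ker_zero_right (hm : 2 ≤ m) (hδ : 0 < δ) {x : ℝ} (hx : 0 ≤ x) (s t : Label) :
    ker m δ (x, s) (0, t) = 0 := by
  have hχ1 := chi_lt_one hm hδ
  have hχ2 := chi_gt_half hm hδ
  unfold ker
  rcases eq_or_lt_of_le hx with h | h
  · rw [← h, min_self, max_self, Real.zero_rpow (by intro hc; linarith : chiC m δ ≠ 0)]
    simp
  · rw [min_eq_right h.le, Real.zero_rpow (by intro hc; linarith : (1 - chiC m δ) ≠ 0)]
    simp

/-- Iterated kernel sums with terminal eigenweight. -/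
def TT (m : ℕ) (δ : ℝ) (n : ℕ) : ℕ → ℕ → Label → ℝ
  | 0, a, s => wgt m δ s * ((a : ℝ)/n) ^ (-(1/2) : ℝ)
  | k+1, a, s => ∑ y ∈ Finset.range (n+1),
      ker m δ ((a:ℝ)/n, s) ((y:ℝ)/n, dlb a y) * TT m δ n k y (dlb a y)

lemma TT_nonneg (hm : 2 ≤ m) (hδ : 0 < δ) (n : ℕ) :
    ∀ k a s, 0 ≤ TT m δ n k a s := by
  intro k
  induction k with
  | zero =>
    intro a s
    exact mul_nonneg (wgt_pos hm hδ s).le (Real.rpow_nonneg (by positivity) _)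
  | succ k ih =>
    intro a s
    apply Finset.sum_nonneg
    intro y _
    exact mul_nonneg (ker_nonneg hm hδ (by positivity) (by positivity) _ _) (ih y _)

lemma nuConst_one_le (hm : 2 ≤ m) (hδ : 0 < δ) : 1 ≤ nuConst m δ := by
  have hA := hm2 hm hδ
  have hR : 0 ≤ Real.sqrt ((m:ℝ) * ((m:ℝ) - 1) * ((m:ℝ) + δ) * ((m:ℝ) + 1 + δ)) :=
    Real.sqrt_nonneg _
  have h1 : 1 ≤ (((m:ℝ) * ((m:ℝ) + δ) +
      Real.sqrt ((m:ℝ) * ((m:ℝ) - 1) * ((m:ℝ) + δ) * ((m:ℝ) + 1 + δ))) / δ) := by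
    rw [le_div_iff₀ hδ]
    nlinarith
  unfold nuConst
  linarith

lemma TT_le (hm : 2 ≤ m) (hδ : 0 < δ) (n : ℕ) (hn : 1 ≤ n) :
    ∀ k a s, 1 ≤ a → a ≤ n →
      TT m δ n k a s ≤ (nuConst m δ * n) ^ k * (wgt m δ s * ((a:ℝ)/n) ^ (-(1/2) : ℝ)) := by
  have hN : (0:ℝ) < n := by exact_mod_cast hn
  have hν : 0 < nuConst m δ := lt_of_lt_of_le one_pos (nuConst_one_le hm hδ)
  intro k
  induction k with
  | zero => intro a s _ _; simp [TT]
  | succ k ih =>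
    intro a s ha1 han
    have hbound : ∀ y ∈ Finset.range (n+1),
        ker m δ ((a:ℝ)/n, s) ((y:ℝ)/n, dlb a y) * TT m δ n k y (dlb a y)
        ≤ (nuConst m δ * n) ^ k *
          (ker m δ ((a:ℝ)/n, s) ((y:ℝ)/n, dlb a y) *
            (wgt m δ (dlb a y) * ((y:ℝ)/n) ^ (-(1/2) : ℝ))) := by
      intro y hy
      rw [Finset.mem_range] at hy
      rcases Nat.eq_zero_or_pos y with rfl | hy1
      · rw [show ((0:ℕ):ℝ)/n = 0 by simp, ker_zero_right hm hδ (by positivity) _ _]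
        simp
      · have h1 := ih y (dlb a y) hy1 (by omega)
        calc ker m δ ((a:ℝ)/n, s) ((y:ℝ)/n, dlb a y) * TT m δ n k y (dlb a y)
            ≤ ker m δ ((a:ℝ)/n, s) ((y:ℝ)/n, dlb a y) *
              ((nuConst m δ * n) ^ k * (wgt m δ (dlb a y) * ((y:ℝ)/n) ^ (-(1/2) : ℝ))) :=
              mul_le_mul_of_nonneg_left h1 (ker_nonneg hm hδ (by positivity) (by positivity) _ _)
          _ = (nuConst m δ * n) ^ k *
              (ker m δ ((a:ℝ)/n, s) ((y:ℝ)/n, dlb a y) *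
                (wgt m δ (dlb a y) * ((y:ℝ)/n) ^ (-(1/2) : ℝ))) := by ring
    calc TT m δ n (k+1) a s
        ≤ ∑ y ∈ Finset.range (n+1), (nuConst m δ * n) ^ k *
            (ker m δ ((a:ℝ)/n, s) ((y:ℝ)/n, dlb a y) *
              (wgt m δ (dlb a y) * ((y:ℝ)/n) ^ (-(1/2) : ℝ))) := Finset.sum_le_sum hbound
      _ = (nuConst m δ * n) ^ k * ∑ y ∈ Finset.range (n+1),
            (ker m δ ((a:ℝ)/n, s) ((y:ℝ)/n, dlb a y) *
              (wgt m δ (dlb a y) * ((y:ℝ)/n) ^ (-(1/2) : ℝ))) := by rw [Finset.mul_sum]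
      _ ≤ (nuConst m δ * n) ^ k * (nuConst m δ * n * (wgt m δ s * ((a:ℝ)/n) ^ (-(1/2) : ℝ))) := by
          apply mul_le_mul_of_nonneg_left (step hm hδ n a hn ha1 han s) (by positivity)
      _ = (nuConst m δ * n) ^ (k+1) * (wgt m δ s * ((a:ℝ)/n) ^ (-(1/2) : ℝ)) := by ring

end TTsec

section Paths
variable {m : ℕ} {δ : ℝ} {k : ℕ}

lemma app_cons (a : ℕ) (ρ : Fin (k+1) → ℕ) (i : ℕ) :
    app (Fin.cons a ρ : Fin (k+1+1) → ℕ) (i+1) = app ρ i := by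
  unfold app
  have h : (⟨min (i+1) (k+1), Nat.lt_succ_of_le (Nat.min_le_right (i+1) (k+1))⟩ : Fin (k+2))
      = Fin.succ ⟨min i k, Nat.lt_succ_of_le (Nat.min_le_right i k)⟩ := by
    apply Fin.ext
    simp [Nat.succ_min_succ]
  rw [h, Fin.cons_succ]

lemma app_cons_zero (a : ℕ) (ρ : Fin (k+1) → ℕ) :
    app (Fin.cons a ρ : Fin (k+1+1) → ℕ) 0 = a := by
  unfold app
  have h : (⟨min 0 (k+1), Nat.lt_succ_of_le (Nat.min_le_right 0 (k+1))⟩ : Fin (k+2)) = 0 := by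
    apply Fin.ext
    simp
  rw [h, Fin.cons_zero]

lemma app_init (π : Fin (k+1+1) → ℕ) {i : ℕ} (h : i ≤ k) :
    app (Fin.init π) i = app π i := by
  unfold app Fin.init
  congr 1
  apply Fin.ext
  simp only [Fin.coe_castSucc]
  omega

lemma lbl_init (lb0 : Label) (π : Fin (k+1+1) → ℕ) {i : ℕ} (h : i ≤ k) :
    lbl lb0 (Fin.init π) i = lbl lb0 π i := by
  by_cases h0 : i = 0
  · simp [lbl, h0]
  · simp only [lbl, if_neg h0]
    rw [app_init π h, app_init π (by omega : i - 1 ≤ k)]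

lemma lbl_zero (lb0 : Label) (π : Fin (k+1) → ℕ) : lbl lb0 π 0 = lb0 := by
  simp [lbl]

lemma lbl_cons (s : Label) (a y : ℕ) (ρ : Fin (k+1) → ℕ) (hρ : app ρ 0 = y) (i : ℕ) :
    lbl s (Fin.cons a ρ : Fin (k+1+1) → ℕ) (i+1) = lbl (dlb a y) ρ i := by
  cases i with
  | zero =>
    have h1 : app (Fin.cons a ρ : Fin (k+1+1) → ℕ) 1 = y := by
      have := app_cons a ρ 0
      rw [hρ] at this
      exact this
    have h0 : app (Fin.cons a ρ : Fin (k+1+1) → ℕ) 0 = a := app_cons_zero a ρ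
    rw [lbl_zero]
    show lbl s (Fin.cons a ρ) 1 = dlb a y
    unfold lbl
    rw [if_neg one_ne_zero, show (1:ℕ) - 1 = 0 from rfl, h1, h0]
    unfold dlb
    rfl
  | succ j =>
    simp only [lbl, if_neg (by omega : j+1+1 ≠ 0), if_neg (by omega : j+1 ≠ 0)]
    rw [show j+1+1-1 = j+1 from rfl, show j+1-1 = j from rfl, app_cons, app_cons]

lemma pathsum_eq (hm : 2 ≤ m) (hδ : 0 < δ) (n : ℕ) :
    ∀ k : ℕ, ∀ a : ℕ, a ≤ n → ∀ s : Label,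
    (∑ π ∈ (Fintype.piFinset fun _ : Fin (k + 1) => Finset.range (n + 1)).filter
        (fun π => app π 0 = a),
      (∏ i ∈ Finset.Icc 1 k,
        ker m δ (((app π (i - 1) : ℕ) : ℝ) / n, lbl s π (i - 1))
          (((app π i : ℕ) : ℝ) / n, lbl s π i))
        * (wgt m δ (lbl s π k) * (((app π k : ℕ) : ℝ) / n) ^ (-(1/2) : ℝ)))
    = TT m δ n k a s := by
  intro k
  induction k with
  | zero =>
    intro a ha s
    have hset : (Fintype.piFinset fun _ : Fin 1 => Finset.range (n + 1)).filter
        (fun π => app π 0 = a) = {fun _ => a} := by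
      ext π
      simp only [Finset.mem_filter, Fintype.mem_piFinset, Finset.mem_range,
        Finset.mem_singleton]
      constructor
      · rintro ⟨h1, h2⟩
        funext i
        have hlt := i.isLt
        have hi : i = ⟨min 0 0, Nat.lt_succ_of_le (Nat.min_le_right 0 0)⟩ :=
          Fin.ext (by omega)
        rw [hi]
        exact h2
      · rintro rfl
        refine ⟨fun i => ?_, rfl⟩
        show a < n + 1
        omega
    rw [hset, Finset.sum_singleton]
    show (∏ i ∈ Finset.Icc 1 0, _) * (wgt m δ (lbl s _ 0) * (((app (fun _ => a) 0 : ℕ):ℝ)/n) ^ (-(1/2):ℝ)) = _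
    rw [show Finset.Icc 1 0 = (∅ : Finset ℕ) from rfl, Finset.prod_empty, one_mul,
      lbl_zero]
    rfl
  | succ k ih =>
    intro a ha s
    -- notation for the summand of length k+1
    set F : (Fin (k+1+1) → ℕ) → ℝ := fun π =>
      (∏ i ∈ Finset.Icc 1 (k+1),
        ker m δ (((app π (i - 1) : ℕ) : ℝ) / n, lbl s π (i - 1))
          (((app π i : ℕ) : ℝ) / n, lbl s π i))
        * (wgt m δ (lbl s π (k+1)) * (((app π (k+1) : ℕ) : ℝ) / n) ^ (-(1/2) : ℝ)) with hF
    have step1 : (∑ π ∈ (Fintype.piFinset fun _ : Fin (k+1+1) => Finset.range (n + 1)).filter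
        (fun π => app π 0 = a), F π)
        = ∑ ρ ∈ Fintype.piFinset (fun _ : Fin (k+1) => Finset.range (n+1)),
            F (Fin.cons a ρ) := by
      apply Finset.sum_nbij' (i := fun π => Fin.tail π) (j := fun ρ => Fin.cons a ρ)
      · intro π hπ
        rw [Finset.mem_filter] at hπ
        rw [Fintype.mem_piFinset]
        intro i
        exact (Fintype.mem_piFinset.1 hπ.1) i.succ
      · intro ρ hρ
        rw [Finset.mem_filter, Fintype.mem_piFinset]
        refine ⟨fun i => ?_, app_cons_zero a ρ⟩
        refine Fin.cases ?_ ?_ i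
        · rw [Fin.cons_zero]
          exact Finset.mem_range.2 (by omega)
        · intro j
          rw [Fin.cons_succ]
          exact (Fintype.mem_piFinset.1 hρ) j
      · intro π hπ
        rw [Finset.mem_filter] at hπ
        have h0 : π 0 = a := by
          have := hπ.2
          unfold app at this
          rwa [show (⟨min 0 (k+1), Nat.lt_succ_of_le (Nat.min_le_right 0 (k+1))⟩ :
            Fin (k+2)) = 0 from Fin.ext (by simp)] at this
        rw [← h0]
        exact Fin.cons_self_tail π
      · intro ρ _
        rfl
      · intro π hπ
        rw [Finset.mem_filter] at hπ
        have h0 : π 0 = a := by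
          have := hπ.2
          unfold app at this
          rwa [show (⟨min 0 (k+1), Nat.lt_succ_of_le (Nat.min_le_right 0 (k+1))⟩ :
            Fin (k+2)) = 0 from Fin.ext (by simp)] at this
        rw [show Fin.cons a (Fin.tail π) = π by rw [← h0]; exact Fin.cons_self_tail π]
    have step2 : ∑ ρ ∈ Fintype.piFinset (fun _ : Fin (k+1) => Finset.range (n+1)),
          F (Fin.cons a ρ)
        = ∑ y ∈ Finset.range (n+1),
            ∑ ρ ∈ (Fintype.piFinset (fun _ : Fin (k+1) => Finset.range (n+1))).filter
              (fun ρ => app ρ 0 = y), F (Fin.cons a ρ) := by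
      symm
      apply Finset.sum_fiberwise_of_maps_to
      intro ρ hρ
      unfold app
      exact (Fintype.mem_piFinset.1 hρ) _
    have step3 : ∀ y ∈ Finset.range (n+1),
        ∑ ρ ∈ (Fintype.piFinset (fun _ : Fin (k+1) => Finset.range (n+1))).filter
              (fun ρ => app ρ 0 = y), F (Fin.cons a ρ)
        = ker m δ ((a:ℝ)/n, s) ((y:ℝ)/n, dlb a y) * TT m δ n k y (dlb a y) := by
      intro y hy
      rw [Finset.mem_range] at hy
      rw [← ih y (by omega) (dlb a y), Finset.mul_sum]
      apply Finset.sum_congr rfl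
      intro ρ hρ
      rw [Finset.mem_filter] at hρ
      have hρ0 : app ρ 0 = y := hρ.2
      simp only [hF]
      -- split the product
      have hpeel : (∏ i ∈ Finset.Icc 1 (k+1),
          ker m δ (((app (Fin.cons a ρ : Fin (k+1+1) → ℕ) (i - 1) : ℕ) : ℝ) / n,
              lbl s (Fin.cons a ρ) (i - 1))
            (((app (Fin.cons a ρ) i : ℕ) : ℝ) / n, lbl s (Fin.cons a ρ) i))
          = ker m δ ((a:ℝ)/n, s) ((y:ℝ)/n, dlb a y) *
            ∏ i ∈ Finset.Icc 1 k,
              ker m δ (((app ρ (i - 1) : ℕ) : ℝ) / n, lbl (dlb a y) ρ (i - 1))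
                (((app ρ i : ℕ) : ℝ) / n, lbl (dlb a y) ρ i) := by
        rw [← Finset.Ico_add_one_right_eq_Icc, Finset.prod_eq_prod_Ico_succ_bot (by omega : 1 < k+1+1)]
        congr 1
        · have e0 : app (Fin.cons a ρ : Fin (k+1+1) → ℕ) 0 = a := app_cons_zero a ρ
          have e1 : app (Fin.cons a ρ : Fin (k+1+1) → ℕ) 1 = y := by
            have := app_cons a ρ 0
            rw [hρ0] at this
            exact this
          have e2 : lbl s (Fin.cons a ρ : Fin (k+1+1) → ℕ) 1 = dlb a y := by
            have := lbl_cons s a y ρ hρ0 0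
            rw [lbl_zero] at this
            exact this
          rw [show (1:ℕ) - 1 = 0 from rfl, e0, e1, e2, lbl_zero]
        · rw [← Finset.Ico_add_one_right_eq_Icc, Finset.prod_Ico_eq_prod_range,
            Finset.prod_Ico_eq_prod_range]
          have hk2 : k + 1 + 1 - 2 = k := by omega
          have hk1 : k + 1 - 1 = k := by omega
          rw [hk2, hk1]
          apply Finset.prod_congr rfl
          intro i _
          have h21 : (2 + i) = (i + 1) + 1 := by omega
          have h11 : (1 + i) = i + 1 := by omega
          rw [h21, h11, show (i+1)+1-1 = i+1 from rfl, show (i+1) - 1 = i from rfl,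
            app_cons, app_cons, lbl_cons s a y ρ hρ0, lbl_cons s a y ρ hρ0]
      rw [hpeel]
      have hlast : lbl s (Fin.cons a ρ : Fin (k+1+1) → ℕ) (k+1) = lbl (dlb a y) ρ k :=
        lbl_cons s a y ρ hρ0 k
      rw [hlast, app_cons a ρ k]
      ring
    rw [step1, step2, Finset.sum_congr rfl step3]
    rfl

lemma app_last (π : Fin (k+1+1) → ℕ) : app π (k+1) = π (Fin.last (k+1)) := by
  unfold app
  congr 1
  apply Fin.ext
  simp [Fin.last]

end Paths

section KerLe
variable {m : ℕ} {δ : ℝ}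

lemma ker_le (hm : 2 ≤ m) (hδ : 0 < δ) {x y : ℝ} (hx : 0 ≤ x) (hy : 0 < y) (s t : Label) :
    ker m δ (x, s) (y, t)
      ≤ ((m:ℝ) * ((m:ℝ) + 1 + δ) / (2 * (m:ℝ) + δ)) * (x ^ (-(1/2) : ℝ) * y ^ (-(1/2) : ℝ)) := by
  have hA := hm2 hm hδ
  have h2 := h2A hm hδ
  have hχ1 := chi_lt_one hm hδ
  have hχ2 := chi_gt_half hm hδ
  have hcm : (0:ℝ) < (m:ℝ) * ((m:ℝ) + 1 + δ) / (2 * (m:ℝ) + δ) := by positivity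
  rcases eq_or_lt_of_le hx with h | hxpos
  · rw [← h]
    unfold ker
    rw [min_eq_left hy.le, Real.zero_rpow (by intro hc; linarith : (1 - chiC m δ) ≠ 0),
      Real.zero_rpow (by norm_num : (-(1/2) : ℝ) ≠ 0)]
    simp
  · have hmaxpos : 0 < max x y := lt_max_of_lt_left hxpos
    have hminpos : 0 < min x y := lt_min hxpos hy
    have hD : max x y ^ ((1:ℝ)/2) * min x y ^ ((1:ℝ)/2)
        ≤ max x y ^ chiC m δ * min x y ^ (1 - chiC m δ) := by
      have e1 : max x y ^ chiC m δ
          = max x y ^ (chiC m δ - 1/2) * max x y ^ ((1:ℝ)/2) := by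
        rw [← Real.rpow_add hmaxpos]
        congr 1
        ring
      have e2 : min x y ^ ((1:ℝ)/2)
          = min x y ^ (chiC m δ - 1/2) * min x y ^ (1 - chiC m δ) := by
        rw [← Real.rpow_add hminpos]
        congr 1
        ring
      rw [e1, e2]
      have hmono : min x y ^ (chiC m δ - 1/2) ≤ max x y ^ (chiC m δ - 1/2) :=
        Real.rpow_le_rpow hminpos.le (min_le_max) (by linarith)
      have hnn1 : 0 ≤ max x y ^ ((1:ℝ)/2) := Real.rpow_nonneg hmaxpos.le _
      have hnn2 : 0 ≤ min x y ^ (1 - chiC m δ) := Real.rpow_nonneg hminpos.le _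
      nlinarith [mul_le_mul_of_nonneg_left hmono (mul_nonneg hnn1 hnn2)]
    have hdpos : (0:ℝ) < max x y ^ ((1:ℝ)/2) * min x y ^ ((1:ℝ)/2) := by
      apply mul_pos <;> exact Real.rpow_pos_of_pos (by assumption) _
    have hnum : cst m δ s t *
        ((if y < x ∧ t = Label.O then (1:ℝ) else 0) + (if x < y ∧ t = Label.Y then (1:ℝ) else 0))
        ≤ (m:ℝ) * ((m:ℝ) + 1 + δ) / (2 * (m:ℝ) + δ) := by
      have hle := cst_le hm hδ s t
      have hnn := cst_nonneg hm hδ s t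
      have hind : ((if y < x ∧ t = Label.O then (1:ℝ) else 0)
          + (if x < y ∧ t = Label.Y then (1:ℝ) else 0)) ≤ 1 := by
        split_ifs with h1 h2 h2
        · exact ((lt_irrefl x) (lt_trans h2.1 h1.1)).elim
        · norm_num
        · norm_num
        · norm_num
      have hind0 : (0:ℝ) ≤ ((if y < x ∧ t = Label.O then (1:ℝ) else 0)
          + (if x < y ∧ t = Label.Y then (1:ℝ) else 0)) := by
        apply add_nonneg <;> · split <;> norm_num
      nlinarith
    have hker : ker m δ (x, s) (y, t)
        ≤ ((m:ℝ) * ((m:ℝ) + 1 + δ) / (2 * (m:ℝ) + δ)) /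
          (max x y ^ ((1:ℝ)/2) * min x y ^ ((1:ℝ)/2)) := by
      unfold ker
      exact div_le_div₀ hcm.le hnum hdpos hD
    refine hker.trans (le_of_eq ?_)
    have hxy : max x y ^ ((1:ℝ)/2) * min x y ^ ((1:ℝ)/2) = x ^ ((1:ℝ)/2) * y ^ ((1:ℝ)/2) := by
      rcases le_total x y with h | h
      · rw [max_eq_right h, min_eq_left h, mul_comm]
      · rw [max_eq_left h, min_eq_right h]
    rw [hxy, Real.rpow_neg hxpos.le, Real.rpow_neg hy.le]
    rw [div_eq_mul_inv, mul_inv]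

end KerLe


lemma mem_filter_imp {α : Type*} {p : α → Prop} {inst : DecidablePred p} {s : Finset α} {x : α}
    (h : x ∈ @Finset.filter α p inst s) : x ∈ s ∧ p x := Finset.mem_filter.1 h

set_option maxHeartbeats 1600000 in
/-- crude upper bound on sums of kernel products along neighbor-avoiding
paths (Lemma 3.4 of the paper). -/
theorem kernel_product_sum_upper_bound
    (m : ℕ) (hm : 2 ≤ m) (δ : ℝ) (hδ : 0 < δ) :
    ∃ C : ℝ, 0 < C ∧
      ∀ ζ ∈ Set.Ioc (0 : ℝ) (1 / 10), ∀ n : ℕ, ζ⁻¹ ^ 2 ≤ (n : ℝ) →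
        ∀ a1 a2 : ℕ, ζ * n ≤ (a1 : ℝ) → a1 ≤ n → ζ * n ≤ (a2 : ℝ) → a2 ≤ n →
        ∀ lb0 : Label, ∀ ℓ : ℕ, 1 ≤ ℓ →
          (∑ π ∈ (Fintype.piFinset fun _ : Fin (ℓ + 1) => Finset.range (n + 1)).filter
              (fun π => app π 0 = a1 ∧ app π ℓ = a2 ∧
                (∀ i, 1 ≤ i → i ≤ ℓ - 1 → ⌈ζ * n⌉₊ ≤ app π i ∧ app π i ≤ n) ∧
                ∀ i, 1 ≤ i → i ≤ ℓ → app π i ≠ app π (i - 1)),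
            ∏ i ∈ Finset.Icc 1 ℓ,
              ker m δ (((app π (i - 1) : ℕ) : ℝ) / n, lbl lb0 π (i - 1))
                (((app π i : ℕ) : ℝ) / n, lbl lb0 π i)) ≤
          C * ζ⁻¹ ^ 2 * nuConst m δ ^ ℓ * (n : ℝ) ^ (ℓ - 1) := by
  have hA := hm2 hm hδ
  have h2 := h2A hm hδ
  have hcm : (0:ℝ) < (m:ℝ) * ((m:ℝ) + 1 + δ) / (2 * (m:ℝ) + δ) := by positivity
  set cmax : ℝ := (m:ℝ) * ((m:ℝ) + 1 + δ) / (2 * (m:ℝ) + δ) with hcmax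
  have hwO := wgt_pos hm hδ Label.O
  have hwY := wgt_pos hm hδ Label.Y
  set W : ℝ := wgt m δ Label.O + wgt m δ Label.Y with hWdef
  set Winv : ℝ := (wgt m δ Label.O)⁻¹ + (wgt m δ Label.Y)⁻¹ with hWinvdef
  have hWpos : 0 < W := by positivity
  have hWinvpos : 0 < Winv := by positivity
  have hWl : ∀ l, 1 ≤ Winv * wgt m δ l := by
    intro l
    have hnn : 0 ≤ (wgt m δ Label.Y)⁻¹ * wgt m δ Label.O := by positivity
    have hnn2 : 0 ≤ (wgt m δ Label.O)⁻¹ * wgt m δ Label.Y := by positivity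
    cases l
    · rw [hWinvdef, add_mul, inv_mul_cancel₀ hwO.ne']
      linarith
    · rw [hWinvdef, add_mul, inv_mul_cancel₀ hwY.ne']
      linarith
  have hwW : ∀ l, wgt m δ l ≤ W := by
    intro l
    cases l
    · rw [hWdef]; linarith
    · rw [hWdef]; linarith
  refine ⟨cmax * Winv * W, by positivity, ?_⟩
  rintro ζ ⟨hζ0, hζ10⟩ n hn a1 a2 ha1l ha1u ha2l ha2u lb0 ℓ hℓ
  obtain ⟨k, rfl⟩ : ∃ k, ℓ = k + 1 := ⟨ℓ - 1, by omega⟩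
  have hζi : (10:ℝ) ≤ ζ⁻¹ := by
    rw [show (10:ℝ) = (1/10 : ℝ)⁻¹ by norm_num]
    exact inv_anti₀ hζ0 hζ10
  have hn100 : (100:ℝ) ≤ n := le_trans (by nlinarith) hn
  have hn1 : 1 ≤ n := by exact_mod_cast (by linarith : (1:ℝ) ≤ n)
  have hN : (0:ℝ) < n := by linarith
  have hζn : (0:ℝ) < ζ * n := by positivity
  have ha1p : 1 ≤ a1 := by
    have h : (0:ℝ) < a1 := lt_of_lt_of_le hζn ha1l
    have : 0 < a1 := by exact_mod_cast h
    omega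
  have ha2r : (0:ℝ) < a2 := lt_of_lt_of_le hζn ha2l
  have hζa1 : ζ ≤ (a1:ℝ)/n := (le_div_iff₀ hN).2 ha1l
  have hζa2 : ζ ≤ (a2:ℝ)/n := (le_div_iff₀ hN).2 ha2l
  have hzhalf : (0:ℝ) < ζ ^ (-(1/2) : ℝ) := Real.rpow_pos_of_pos hζ0 _
  have hz1 : ((a1:ℝ)/n) ^ (-(1/2) : ℝ) ≤ ζ ^ (-(1/2) : ℝ) :=
    Real.rpow_le_rpow_of_nonpos hζ0 hζa1 (by norm_num)
  have hz2 : ((a2:ℝ)/n) ^ (-(1/2) : ℝ) ≤ ζ ^ (-(1/2) : ℝ) :=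
    Real.rpow_le_rpow_of_nonpos hζ0 hζa2 (by norm_num)
  have hν1 : 1 ≤ nuConst m δ := nuConst_one_le hm hδ
  -- weighted path sum of length k
  set G : (Fin (k + 1) → ℕ) → ℝ := fun ρ =>
    (∏ i ∈ Finset.Icc 1 k,
      ker m δ (((app ρ (i - 1) : ℕ) : ℝ) / n, lbl lb0 ρ (i - 1))
        (((app ρ i : ℕ) : ℝ) / n, lbl lb0 ρ i))
      * (wgt m δ (lbl lb0 ρ k) * (((app ρ k : ℕ) : ℝ) / n) ^ (-(1/2) : ℝ)) with hG
  have hGnonneg : ∀ ρ, 0 ≤ G ρ := by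
    intro ρ
    apply mul_nonneg
    · exact Finset.prod_nonneg fun i _ => ker_nonneg hm hδ (by positivity) (by positivity) _ _
    · exact mul_nonneg (wgt_pos hm hδ _).le (Real.rpow_nonneg (by positivity) _)
  set Cw : ℝ := cmax * ζ ^ (-(1/2) : ℝ) * Winv with hCw
  have hCwpos : 0 < Cw := by
    rw [hCw]
    exact mul_pos (mul_pos hcm hzhalf) hWinvpos
  -- Step I: termwise bound
  have key1 : ∀ π ∈ (Fintype.piFinset fun _ : Fin (k + 1 + 1) => Finset.range (n + 1)).filter
      (fun π => app π 0 = a1 ∧ app π (k+1) = a2 ∧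
        (∀ i, 1 ≤ i → i ≤ k + 1 - 1 → ⌈ζ * n⌉₊ ≤ app π i ∧ app π i ≤ n) ∧
        ∀ i, 1 ≤ i → i ≤ k + 1 → app π i ≠ app π (i - 1)),
      (∏ i ∈ Finset.Icc 1 (k+1),
        ker m δ (((app π (i - 1) : ℕ) : ℝ) / n, lbl lb0 π (i - 1))
          (((app π i : ℕ) : ℝ) / n, lbl lb0 π i))
      ≤ Cw * G (Fin.init π) := by
    intro π hπ
    replace hπ := mem_filter_imp hπ
    have hend : app π (k+1) = a2 := hπ.2.2.1
    have hQnonneg : 0 ≤ ∏ i ∈ Finset.Icc 1 k,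
        ker m δ (((app π (i - 1) : ℕ) : ℝ) / n, lbl lb0 π (i - 1))
          (((app π i : ℕ) : ℝ) / n, lbl lb0 π i) :=
      Finset.prod_nonneg fun i _ => ker_nonneg hm hδ (by positivity) (by positivity) _ _
    have hQ : (∏ i ∈ Finset.Icc 1 k,
        ker m δ (((app (Fin.init π) (i - 1) : ℕ) : ℝ) / n, lbl lb0 (Fin.init π) (i - 1))
          (((app (Fin.init π) i : ℕ) : ℝ) / n, lbl lb0 (Fin.init π) i))
        = ∏ i ∈ Finset.Icc 1 k,
        ker m δ (((app π (i - 1) : ℕ) : ℝ) / n, lbl lb0 π (i - 1))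
          (((app π i : ℕ) : ℝ) / n, lbl lb0 π i) := by
      apply Finset.prod_congr rfl
      intro i hi
      rw [Finset.mem_Icc] at hi
      rw [app_init (i := i) π (by omega), app_init (i := i - 1) π (by omega),
        lbl_init (i := i) lb0 π (by omega), lbl_init (i := i - 1) lb0 π (by omega)]
    have hlastker : ker m δ (((app π k : ℕ) : ℝ) / n, lbl lb0 π k)
          (((app π (k+1) : ℕ) : ℝ) / n, lbl lb0 π (k+1))
        ≤ cmax * ((((app π k : ℕ) : ℝ) / n) ^ (-(1/2) : ℝ) * ζ ^ (-(1/2) : ℝ)) := by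
      rw [hend]
      refine (ker_le hm hδ (by positivity) (div_pos ha2r hN) _ _).trans ?_
      rw [← hcmax]
      apply mul_le_mul_of_nonneg_left ?_ hcm.le
      exact mul_le_mul_of_nonneg_left hz2 (Real.rpow_nonneg (by positivity) _)
    rw [Finset.prod_Icc_succ_top (by omega : 1 ≤ k + 1), hG]
    simp only []
    rw [app_init π (le_refl k), lbl_init lb0 π (le_refl k), hQ]
    set Q : ℝ := ∏ i ∈ Finset.Icc 1 k,
        ker m δ (((app π (i - 1) : ℕ) : ℝ) / n, lbl lb0 π (i - 1))
          (((app π i : ℕ) : ℝ) / n, lbl lb0 π i) with hQdef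
    set x' : ℝ := (((app π k : ℕ) : ℝ) / n) ^ (-(1/2) : ℝ) with hx'
    have hx'nn : 0 ≤ x' := Real.rpow_nonneg (by positivity) _
    calc Q * ker m δ (((app π k : ℕ) : ℝ) / n, lbl lb0 π k)
          (((app π (k+1) : ℕ) : ℝ) / n, lbl lb0 π (k+1))
        ≤ Q * (cmax * (x' * ζ ^ (-(1/2) : ℝ))) := mul_le_mul_of_nonneg_left hlastker hQnonneg
      _ = cmax * ζ ^ (-(1/2) : ℝ) * 1 * (Q * (wgt m δ (lbl lb0 π k) * x')) *
            (wgt m δ (lbl lb0 π k))⁻¹ := by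
          field_simp [(wgt_pos hm hδ (lbl lb0 π k)).ne']
      _ ≤ cmax * ζ ^ (-(1/2) : ℝ) * (Winv * wgt m δ (lbl lb0 π k)) *
            (Q * (wgt m δ (lbl lb0 π k) * x')) * (wgt m δ (lbl lb0 π k))⁻¹ := by
          apply mul_le_mul_of_nonneg_right ?_ (inv_nonneg.2 (wgt_pos hm hδ _).le)
          apply mul_le_mul_of_nonneg_right ?_
            (mul_nonneg hQnonneg (mul_nonneg (wgt_pos hm hδ _).le hx'nn))
          apply mul_le_mul_of_nonneg_left (hWl _) (mul_nonneg hcm.le hzhalf.le)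
      _ = Cw * (Q * (wgt m δ (lbl lb0 π k) * x')) := by
          rw [hCw]
          field_simp [(wgt_pos hm hδ (lbl lb0 π k)).ne']
  -- Step II+III
  have key2 : (∑ π ∈ (Fintype.piFinset fun _ : Fin (k + 1 + 1) => Finset.range (n + 1)).filter
      (fun π => app π 0 = a1 ∧ app π (k+1) = a2 ∧
        (∀ i, 1 ≤ i → i ≤ k + 1 - 1 → ⌈ζ * n⌉₊ ≤ app π i ∧ app π i ≤ n) ∧
        ∀ i, 1 ≤ i → i ≤ k + 1 → app π i ≠ app π (i - 1)),
      (∏ i ∈ Finset.Icc 1 (k+1),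
        ker m δ (((app π (i - 1) : ℕ) : ℝ) / n, lbl lb0 π (i - 1))
          (((app π i : ℕ) : ℝ) / n, lbl lb0 π i)))
      ≤ Cw * TT m δ n k a1 lb0 := by
    refine (Finset.sum_le_sum key1).trans ?_
    have hsub : ((Fintype.piFinset fun _ : Fin (k + 1 + 1) => Finset.range (n + 1)).filter
        (fun π => app π 0 = a1 ∧ app π (k+1) = a2 ∧
          (∀ i, 1 ≤ i → i ≤ k + 1 - 1 → ⌈ζ * n⌉₊ ≤ app π i ∧ app π i ≤ n) ∧
          ∀ i, 1 ≤ i → i ≤ k + 1 → app π i ≠ app π (i - 1)))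
        ⊆ ((Fintype.piFinset fun _ : Fin (k + 1 + 1) => Finset.range (n + 1)).filter
        (fun π => app π 0 = a1 ∧ app π (k+1) = a2)) :=
      by
        intro π hπ
        have h := mem_filter_imp hπ
        exact Finset.mem_filter.2 ⟨h.1, h.2.1, h.2.2.1⟩
    refine (Finset.sum_le_sum_of_subset_of_nonneg hsub
      (fun π _ _ => mul_nonneg hCwpos.le (hGnonneg _))).trans ?_
    have hbij : ∑ π ∈ ((Fintype.piFinset fun _ : Fin (k + 1 + 1) => Finset.range (n + 1)).filter
        (fun π => app π 0 = a1 ∧ app π (k+1) = a2)), Cw * G (Fin.init π)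
        = ∑ ρ ∈ ((Fintype.piFinset fun _ : Fin (k + 1) => Finset.range (n + 1)).filter
            (fun ρ => app ρ 0 = a1)), Cw * G ρ := by
      apply Finset.sum_nbij' (i := fun π => Fin.init π) (j := fun ρ => Fin.snoc ρ a2)
      · intro π hπ
        rw [Finset.mem_filter] at hπ ⊢
        refine ⟨Fintype.mem_piFinset.2 fun i => ?_, ?_⟩
        · exact (Fintype.mem_piFinset.1 hπ.1) _
        · rw [app_init π (Nat.zero_le k)]
          exact hπ.2.1
      · intro ρ hρ
        rw [Finset.mem_filter] at hρ ⊢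
        refine ⟨Fintype.mem_piFinset.2 fun i => ?_, ?_, ?_⟩
        · refine Fin.lastCases ?_ ?_ i
          · rw [Fin.snoc_last]
            exact Finset.mem_range.2 (by omega)
          · intro j
            rw [Fin.snoc_castSucc]
            exact (Fintype.mem_piFinset.1 hρ.1) _
        · have h := app_init (Fin.snoc ρ a2 : Fin (k+1+1) → ℕ) (Nat.zero_le k)
          rw [Fin.init_snoc] at h
          rw [← h]
          exact hρ.2
        · rw [app_last (Fin.snoc ρ a2 : Fin (k+1+1) → ℕ), Fin.snoc_last]
      · intro π hπ
        rw [Finset.mem_filter] at hπ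
        have hπl : π (Fin.last (k+1)) = a2 := (app_last π).symm.trans hπ.2.2
        rw [← hπl]
        exact Fin.snoc_init_self π
      · intro ρ _
        funext j
        simp [Fin.init]
      · intro π _
        rfl
    rw [hbij, ← Finset.mul_sum]
    apply mul_le_mul_of_nonneg_left ?_ hCwpos.le
    rw [hG]
    exact le_of_eq (pathsum_eq hm hδ n k a1 ha1u lb0)
  -- Step IV: bound TT
  have key3 : TT m δ n k a1 lb0 ≤ (nuConst m δ * n) ^ k * (W * ζ ^ (-(1/2) : ℝ)) := by
    refine (TT_le hm hδ n hn1 k a1 lb0 ha1p ha1u).trans ?_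
    apply mul_le_mul_of_nonneg_left ?_ (by positivity)
    exact mul_le_mul (hwW lb0) hz1 (Real.rpow_nonneg (by positivity) _) hWpos.le
  -- final arithmetic
  have hzz : ζ ^ (-(1/2) : ℝ) * ζ ^ (-(1/2) : ℝ) = ζ⁻¹ := by
    rw [← Real.rpow_add hζ0, show (-(1/2) : ℝ) + (-(1/2)) = -1 by norm_num,
      Real.rpow_neg_one]
  have hfac : ζ⁻¹ * nuConst m δ ^ k ≤ ζ⁻¹ ^ 2 * nuConst m δ ^ (k+1) := by
    have h1 : ζ⁻¹ ≤ ζ⁻¹ ^ 2 := by nlinarith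
    have h2 : nuConst m δ ^ k ≤ nuConst m δ ^ (k+1) :=
      pow_le_pow_right₀ hν1 (by omega)
    exact mul_le_mul h1 h2 (pow_nonneg (by linarith) k) (sq_nonneg _)
  calc (∑ π ∈ (Fintype.piFinset fun _ : Fin (k + 1 + 1) => Finset.range (n + 1)).filter
      (fun π => app π 0 = a1 ∧ app π (k+1) = a2 ∧
        (∀ i, 1 ≤ i → i ≤ k + 1 - 1 → ⌈ζ * n⌉₊ ≤ app π i ∧ app π i ≤ n) ∧
        ∀ i, 1 ≤ i → i ≤ k + 1 → app π i ≠ app π (i - 1)),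
      (∏ i ∈ Finset.Icc 1 (k+1),
        ker m δ (((app π (i - 1) : ℕ) : ℝ) / n, lbl lb0 π (i - 1))
          (((app π i : ℕ) : ℝ) / n, lbl lb0 π i)))
      ≤ Cw * ((nuConst m δ * n) ^ k * (W * ζ ^ (-(1/2) : ℝ))) :=
        key2.trans (mul_le_mul_of_nonneg_left key3 hCwpos.le)
    _ = (ζ⁻¹ * nuConst m δ ^ k) * ((cmax * Winv * W) * (n:ℝ) ^ k) := by
        rw [hCw, mul_pow, ← hzz]
        ring
    _ ≤ (ζ⁻¹ ^ 2 * nuConst m δ ^ (k+1)) * ((cmax * Winv * W) * (n:ℝ) ^ k) := by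
        apply mul_le_mul_of_nonneg_right hfac
        exact mul_nonneg (by positivity) (pow_nonneg hN.le k)
    _ = cmax * Winv * W * ζ⁻¹ ^ 2 * nuConst m δ ^ (k+1) * (n:ℝ) ^ (k + 1 - 1) := by
        rw [Nat.add_sub_cancel]
        ring


end PAPaper
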